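/- arXiv:1803.03695 — 5 statements merged into one kernel-verified Lean document; each statement's English description precedes it below -/
import Mathlib

section
/- Let Q : ℝ^d → ℝ^d be a convex Q-operator. Then every matrix q ∈ ℝ^{d×d} with finite conjugate, i.e. with sup_{u ∈ ℝ^d} (qu − Q(u)) < ∞ componentwise, is a Q-matrix. -/
def IsQMatrix {d : ℕ} (q : Matrix (Fin d) (Fin d) ℝ) : Prop :=
  (∀ i, q i i ≤ 0) ∧ (∀ i j, i ≠ j → 0 ≤ q i j) ∧ (∀ i, ∑ j, q i j = 0)

/-- A (possibly nonlinear) `Q`-operator. -/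
def IsQOperator {d : ℕ} (Q : (Fin d → ℝ) → (Fin d → ℝ)) : Prop :=
  (∀ (l : ℝ), 0 < l → ∀ i, Q (l • (Pi.single i 1 : Fin d → ℝ)) i ≤ 0) ∧
  (∀ (l : ℝ), 0 < l → ∀ i j, i ≠ j → Q (-(l • (Pi.single j 1 : Fin d → ℝ))) i ≤ 0) ∧
  (∀ α : ℝ, Q (fun _ => α) = 0)

lemma aux_nonpos (a C : ℝ) (h : ∀ l : ℝ, 0 < l → l * a ≤ C) : a ≤ 0 := by
  by_contra h'
  push_neg at h'
  have hl : (0:ℝ) < (|C| + 1) / a := div_pos (by positivity) h'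
  have := h _ hl
  rw [div_mul_cancel₀ _ (ne_of_gt h')] at this
  have := le_abs_self C
  linarith

/-- Every matrix in the effective domain of the conjugate of a convex
`Q`-operator is a `Q`-matrix. -/
theorem qMatrix_of_finite_conjugate {d : ℕ} (hd : 0 < d)
    (Q : (Fin d → ℝ) → (Fin d → ℝ))
    (hQop : IsQOperator Q)
    (hconv : ∀ i, ConvexOn ℝ Set.univ (fun u => Q u i))
    (q : Matrix (Fin d) (Fin d) ℝ)
    (hfin : ∀ i, BddAbove (Set.range fun u : Fin d → ℝ => q.mulVec u i - Q u i)) :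
    IsQMatrix q := by
  obtain ⟨h1, h2, h3⟩ := hQop
  have hbd : ∀ i, ∃ C : ℝ, ∀ u : Fin d → ℝ, q.mulVec u i - Q u i ≤ C := by
    intro i
    obtain ⟨C, hC⟩ := hfin i
    exact ⟨C, fun u => hC ⟨u, rfl⟩⟩
  have hsingle : ∀ (l : ℝ) (i j : Fin d),
      q.mulVec (l • (Pi.single j 1 : Fin d → ℝ)) i = l * q i j := by
    intro l i j
    simp [Matrix.mulVec, dotProduct, Pi.single_apply, Finset.sum_ite_eq,
      mul_comm, mul_assoc]
  have hconstv : ∀ (α : ℝ) (i : Fin d),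
      q.mulVec (fun _ => α) i = α * ∑ j, q i j := by
    intro α i
    simp [Matrix.mulVec, dotProduct, Finset.mul_sum, mul_comm, dotProduct]
  refine ⟨?_, ?_, ?_⟩
  · intro i
    obtain ⟨C, hC⟩ := hbd i
    refine aux_nonpos _ C fun l hl => ?_
    have := hC (l • (Pi.single i 1 : Fin d → ℝ))
    rw [hsingle] at this
    have hQ := h1 l hl i
    linarith
  · intro i j hij
    obtain ⟨C, hC⟩ := hbd i
    have : -q i j ≤ 0 := by
      refine aux_nonpos _ C fun l hl => ?_
      have := hC (-(l • (Pi.single j 1 : Fin d → ℝ)))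
      have hm : q.mulVec (-(l • (Pi.single j 1 : Fin d → ℝ))) i = -(l * q i j) := by
        rw [Matrix.mulVec_neg, Pi.neg_apply, hsingle]
      rw [hm] at this
      have hQ := h2 l hl i j hij
      linarith
    linarith
  · intro i
    obtain ⟨C, hC⟩ := hbd i
    have key : ∀ α : ℝ, α * ∑ j, q i j ≤ C := by
      intro α
      have := hC (fun _ => α)
      rw [hconstv, h3] at this
      simpa using this
    have hle : (∑ j, q i j) ≤ 0 := aux_nonpos _ C fun l hl => key l
    have hge : -(∑ j, q i j) ≤ 0 := by
      refine aux_nonpos _ C fun l hl => ?_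
      have := key (-l)
      linarith
    linarith
end

section
/- Let (S(t))_{t≥0} be a family of maps S(t) : ℝ^d → ℝ^d such that S(0) = id, S(s+t) = S(s)∘S(t), each S(t) is monotone (u ≤ v implies S(t)u ≤ S(t)v) and preserves constants (S(t)(α·1) = α·1), each S(t) is convex, and the limit Qu := lim_{h↓0} (S(h)u − u)/h exists for all u ∈ ℝ^d. Then Q is convex, Q(α·1) = 0 for all α ∈ ℝ, and Q satisfies the positive maximum principle: if u_i ≥ u_j for all j, then (Qu)_i ≤ 0. -/
open Filter Topology

/-! The generator is the pointwise limit of the difference quotients `h⁻¹ • (S h - id)`, and each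
of the three properties holds for every difference quotient with `h > 0` and is stable under limits:
convexity because `S h` is convex and `id` is linear, vanishing on constants because `S h` fixes
them, and the maximum principle because `S h u ≤ S h (u i • 1) = u i • 1` when `u i` is maximal. -/

theorem ConvexOn.of_tendsto {ι 𝕜 E β : Type*} [Semiring 𝕜] [PartialOrder 𝕜] [AddCommMonoid E]
    [SMul 𝕜 E] [PartialOrder β] [TopologicalSpace β] [OrderClosedTopology β] [AddCommMonoid β]
    [SMul 𝕜 β] [ContinuousConstSMul 𝕜 β] [ContinuousAdd β] {l : Filter ι} [l.NeBot]
    {F : ι → E → β} {f : E → β} {s : Set E} (hF : ∀ᶠ n in l, ConvexOn 𝕜 s (F n))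
    (hlim : ∀ x, Tendsto (fun n => F n x) l (𝓝 (f x))) : ConvexOn 𝕜 s f :=
  isClosed_setOfPred_convexOn.mem_of_tendsto (tendsto_pi_nhds.2 hlim) hF

theorem apply_le_const_of_le_const {ι : Type*} {T : (ι → ℝ) → ι → ℝ} (hT : Monotone T)
    {c : ℝ} (hc : T (fun _ => c) = fun _ => c) {u : ι → ℝ} (hu : u ≤ fun _ => c) :
    T u ≤ fun _ => c :=
  hc ▸ hT hu

theorem generator_of_convex_markov_semigroup_general {d : ℕ}
    (S : ℝ → (Fin d → ℝ) → (Fin d → ℝ))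
    (Q : (Fin d → ℝ) → (Fin d → ℝ))
    (hmono : ∀ t : ℝ, 0 ≤ t → ∀ u v : Fin d → ℝ, u ≤ v → S t u ≤ S t v)
    (hconst : ∀ t : ℝ, 0 ≤ t → ∀ α : ℝ, S t (fun _ => α) = fun _ => α)
    (hconv : ∀ t : ℝ, 0 ≤ t → ∀ i, ConvexOn ℝ Set.univ (fun u => S t u i))
    (hder : ∀ u : Fin d → ℝ,
      Tendsto (fun h : ℝ => h⁻¹ • (S h u - u)) (𝓝[>] 0) (𝓝 (Q u))) :
    (∀ i, ConvexOn ℝ Set.univ (fun u => Q u i)) ∧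
    (∀ α : ℝ, Q (fun _ => α) = 0) ∧
    (∀ (u : Fin d → ℝ) (i : Fin d), (∀ j, u j ≤ u i) → Q u i ≤ 0) := by
  have hder_apply (u : Fin d → ℝ) (i : Fin d) :
      Tendsto (fun h : ℝ => h⁻¹ * (S h u i - u i)) (𝓝[>] 0) (𝓝 (Q u i)) :=
    tendsto_pi_nhds.1 (hder u) i
  refine ⟨fun i => ?_, fun α => ?_, fun u i hmax => ?_⟩
  · refine ConvexOn.of_tendsto ?_ fun u => hder_apply u i
    filter_upwards [self_mem_nhdsWithin] with h (hh : 0 < h)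
    exact ((hconv h hh.le i).sub ((LinearMap.proj i).concaveOn convex_univ)).smul
      (inv_nonneg.2 hh.le)
  · refine tendsto_nhds_unique (hder _) (tendsto_const_nhds.congr' ?_)
    filter_upwards [self_mem_nhdsWithin] with h (hh : 0 < h)
    simp [hconst h hh.le]
  · refine le_of_tendsto (hder_apply u i) ?_
    filter_upwards [self_mem_nhdsWithin] with h (hh : 0 < h)
    have hSu : S h u i ≤ u i :=
      apply_le_const_of_le_const (fun v w => hmono h hh.le v w) (hconst h hh.le (u i)) hmax i
    exact mul_nonpos_of_nonneg_of_nonpos (inv_nonneg.2 hh.le) (sub_nonpos.2 hSu)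

/-- The generator of a uniformly continuous convex Markovian semigroup is convex,
vanishes on constants, and satisfies the positive maximum principle. -/
theorem generator_of_convex_markov_semigroup {d : ℕ} (hd : 0 < d)
    (S : ℝ → (Fin d → ℝ) → (Fin d → ℝ))
    (Q : (Fin d → ℝ) → (Fin d → ℝ))
    (hid : S 0 = id)
    (hsg : ∀ s t : ℝ, 0 ≤ s → 0 ≤ t → S (s + t) = S s ∘ S t)
    (hmono : ∀ t : ℝ, 0 ≤ t → ∀ u v : Fin d → ℝ, u ≤ v → S t u ≤ S t v)
    (hconst : ∀ t : ℝ, 0 ≤ t → ∀ α : ℝ, S t (fun _ => α) = fun _ => α)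
    (hconv : ∀ t : ℝ, 0 ≤ t → ∀ i, ConvexOn ℝ Set.univ (fun u => S t u i))
    (hder : ∀ u : Fin d → ℝ,
      Tendsto (fun h : ℝ => h⁻¹ • (S h u - u)) (𝓝[>] 0) (𝓝 (Q u))) :
    (∀ i, ConvexOn ℝ Set.univ (fun u => Q u i)) ∧
    (∀ α : ℝ, Q (fun _ => α) = 0) ∧
    (∀ (u : Fin d → ℝ) (i : Fin d), (∀ j, u j ≤ u i) → Q u i ≤ 0) :=
  generator_of_convex_markov_semigroup_general S Q hmono hconst hconv hder
end

section
/- For every Q-matrix q ∈ ℝ^{d×d} and every t ≥ 0, the matrix exponential e^{tq} is a stochastic matrix: all entries of e^{tq} are nonnegative and each row of e^{tq} sums to 1. -/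
/-!
Shifting `t • q` by the scalar matrix `-(t * trace q) • 1` makes all its entries nonnegative, and
the exponential of an entrywise nonnegative matrix is entrywise nonnegative, being a limit of
nonnegative combinations of its powers; the shift only rescales the exponential by a positive
factor. For the row sums, `q` annihilates the all-ones matrix, so against it only the `n = 0` term
of the exponential series survives.
-/

open NormedSpace

theorem NormedSpace.exp_mul_of_mul_eq_zero {𝔸 : Type*} [NormedRing 𝔸] [NormedAlgebra ℚ 𝔸]
    [CompleteSpace 𝔸] {x y : 𝔸} (h : x * y = 0) : exp x * y = y := by
  have hterm : ∀ n ≠ 0, ((n.factorial⁻¹ : ℚ) • x ^ n) * y = 0 := fun n hn => by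
    rw [smul_mul_assoc, ← Nat.succ_pred_eq_of_ne_zero hn, pow_succ, mul_assoc, h, mul_zero,
      smul_zero]
  refine ((exp_series_hasSum_exp' (𝕂 := ℚ) x).mul_right y).unique ?_
  simpa using hasSum_single 0 hterm

namespace Matrix

variable {m : Type*} [Fintype m] [DecidableEq m]

theorem exp_mul_of_mul_eq_zero {A B : Matrix m m ℝ} (h : A * B = 0) : exp A * B = B :=
  open scoped Norms.Operator in NormedSpace.exp_mul_of_mul_eq_zero h

variable (m) in
def nonnegSubsemiring : Subsemiring (Matrix m m ℝ) where
  carrier := {A | ∀ i j, 0 ≤ A i j}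
  zero_mem' _ _ := le_rfl
  one_mem' i j := by rw [one_apply]; split_ifs <;> norm_num
  add_mem' hA hB i j := add_nonneg (hA i j) (hB i j)
  mul_mem' hA hB i j := Finset.sum_nonneg fun k _ => mul_nonneg (hA i k) (hB k j)

theorem isClosed_nonnegSubsemiring : IsClosed (nonnegSubsemiring m : Set (Matrix m m ℝ)) := by
  simp only [nonnegSubsemiring, Subsemiring.coe_set_mk, Set.ofPred_forall]
  exact isClosed_iInter fun i => isClosed_iInter fun j =>
    isClosed_le continuous_const ((continuous_apply j).comp (continuous_apply i))

theorem exp_mem_nonnegSubsemiring {A : Matrix m m ℝ} (hA : A ∈ nonnegSubsemiring m) :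
    exp A ∈ nonnegSubsemiring m := by
  rw [exp_eq_tsum ℝ]
  refine tsum_mem isClosed_nonnegSubsemiring fun n i j => ?_
  exact mul_nonneg (by positivity) (pow_mem hA n i j)

theorem exp_add_smul_one (A : Matrix m m ℝ) (c : ℝ) :
    exp (A + c • 1) = Real.exp c • exp A := by
  rw [exp_add_of_commute _ _ ((Commute.one_right A).smul_right c), smul_one_eq_diagonal,
    exp_diagonal, Pi.exp_def, ← Real.exp_eq_exp_ℝ, ← smul_one_eq_diagonal, mul_smul_comm, mul_one]

end Matrix

namespace IsQMatrix

variable {d : ℕ} {q : Matrix (Fin d) (Fin d) ℝ}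

theorem trace_le_diag (hq : IsQMatrix q) (i : Fin d) : q.trace ≤ q i i :=
  calc q.trace = q i i + ∑ j ∈ Finset.univ.erase i, q j j :=
        (Finset.add_sum_erase _ _ (Finset.mem_univ i)).symm
    _ ≤ q i i := add_le_of_nonpos_right (Finset.sum_nonpos fun j _ => hq.1 j)

theorem smul_sub_smul_one_mem_nonnegSubsemiring (hq : IsQMatrix q) {t : ℝ} (ht : 0 ≤ t) :
    t • q - (t * q.trace) • 1 ∈ Matrix.nonnegSubsemiring (Fin d) := by
  intro i j
  rcases eq_or_ne i j with rfl | hij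
  · simpa [mul_sub] using mul_le_mul_of_nonneg_left (hq.trace_le_diag i) ht
  · simpa [Matrix.one_apply_ne hij] using mul_nonneg ht (hq.2.1 i j hij)

theorem mul_ones_eq_zero (hq : IsQMatrix q) : q * Matrix.of (fun _ _ => 1) = 0 := by
  ext i j
  simp [Matrix.mul_apply, hq.2.2 i]

end IsQMatrix

theorem exp_qMatrix_stochastic_general {d : ℕ}
    (q : Matrix (Fin d) (Fin d) ℝ) (hq : IsQMatrix q) (t : ℝ) (ht : 0 ≤ t) :
    (∀ i j, 0 ≤ NormedSpace.exp (t • q) i j) ∧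
    (∀ i, ∑ j, NormedSpace.exp (t • q) i j = 1) := by
  constructor
  · intro i j
    have hshift := Matrix.exp_add_smul_one (t • q - (t * q.trace) • 1) (t * q.trace)
    rw [sub_add_cancel] at hshift
    rw [hshift]
    exact mul_nonneg (Real.exp_pos _).le
      (Matrix.exp_mem_nonnegSubsemiring (hq.smul_sub_smul_one_mem_nonnegSubsemiring ht) i j)
  · intro i
    have hones : t • q * Matrix.of (fun _ _ => (1 : ℝ)) = 0 := by
      rw [smul_mul_assoc, hq.mul_ones_eq_zero, smul_zero]
    simpa [Matrix.mul_apply] using congrFun₂ (Matrix.exp_mul_of_mul_eq_zero hones) i i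

/-- For a `Q`-matrix `q` and `t ≥ 0`, the matrix exponential `e^{tq}` is a
stochastic matrix. -/
theorem exp_qMatrix_stochastic {d : ℕ} (hd : 0 < d)
    (q : Matrix (Fin d) (Fin d) ℝ) (hq : IsQMatrix q) (t : ℝ) (ht : 0 ≤ t) :
    (∀ i j, 0 ≤ NormedSpace.exp (t • q) i j) ∧
    (∀ i, ∑ j, NormedSpace.exp (t • q) i j = 1) :=
  exp_qMatrix_stochastic_general q hq t ht
end

section
/- Let 𝒫 be a set of Q-matrices with associated penalizations (f_q)_{q∈𝒫} such that sup_q f_q = 0 is attained. The Nisio semigroup 𝒮(t)u₀ = sup_{π ∈ P_t} ℰ_π u₀ satisfies the dynamic programming principle: 𝒮(s+t) = 𝒮(s) ∘ 𝒮(t) for all s, t ≥ 0, and 𝒮(0) = id. -/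
/-- The affine semigroup `S_q(t)u₀ = e^{tq}u₀ + ∫₀^t e^{sq} f ds`. -/
noncomputable def Sq {d : ℕ} (q : Matrix (Fin d) (Fin d) ℝ) (f : Fin d → ℝ)
    (t : ℝ) (u : Fin d → ℝ) : Fin d → ℝ :=
  (NormedSpace.exp (t • q)).mulVec u +
    ∫ s in (0 : ℝ)..t, (NormedSpace.exp (s • q)).mulVec f

/-- The one-step operator `ℰ_h u = sup_{q ∈ P} S_q(h)u` (componentwise sup). -/
noncomputable def Eop {d : ℕ} (P : Set (Matrix (Fin d) (Fin d) ℝ))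
    (f : Matrix (Fin d) (Fin d) ℝ → Fin d → ℝ) (h : ℝ) (u : Fin d → ℝ) :
    Fin d → ℝ :=
  fun i => sSup ((fun q => Sq q (f q) h u i) '' P)

/-- Successive gaps `[t₁ - t₀, …, t_m - t_{m-1}]` of a list `[t₀, …, t_m]`. -/
def listGaps (l : List ℝ) : List ℝ := l.tail.zipWith (· - ·) l

/-- The iterated operator `ℰ_π = ℰ_{t₁-t₀} ∘ … ∘ ℰ_{t_m - t_{m-1}}` associated to a
finite partition `π = {t₀ < t₁ < … < t_m}`. -/
noncomputable def Epart {d : ℕ} (E : ℝ → (Fin d → ℝ) → (Fin d → ℝ))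
    (pa : Finset ℝ) : (Fin d → ℝ) → (Fin d → ℝ) :=
  ((listGaps (pa.sort (· ≤ ·))).map E).foldr (· ∘ ·) id

/-- Finite partitions of `[0, t]` containing `0` and `t`. -/
def partitionsTo (t : ℝ) : Set (Finset ℝ) :=
  {pa | (0 : ℝ) ∈ pa ∧ t ∈ pa ∧ ∀ s ∈ pa, s ∈ Set.Icc (0 : ℝ) t}

/-- The Nisio semigroup `𝒮(t)u = sup_{π ∈ P_t} ℰ_π u` (componentwise sup). -/
noncomputable def NisioS {d : ℕ} (P : Set (Matrix (Fin d) (Fin d) ℝ))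
    (f : Matrix (Fin d) (Fin d) ℝ → Fin d → ℝ) (t : ℝ) (u : Fin d → ℝ) :
    Fin d → ℝ :=
  fun i => sSup ((fun pa => Epart (Eop P f) pa u i) '' partitionsTo t)

/-!
For a Q-matrix `q`, `e^{hq}` is entrywise nonnegative with unit row sums, so each affine map
`Sq q (f q) h` is monotone, commutes with adding constant vectors, and forms a semigroup in `h`.
Taking suprema over `q`, the operators `ℰ_h` are monotone, satisfy `ℰ_h (u + c) ≤ ℰ_h u + c`
and `ℰ_{a+b} ≤ ℰ_a ℰ_b`; the last inequality says that refining a partition can only increase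
`ℰ_π`, while gluing a partition of `[0, s]` to a translated partition of `[0, t]` composes the
operators exactly. Hence `𝒮(s+t) ≤ 𝒮(s) 𝒮(t)`, by adding `s` to a partition of `[0, s+t]` and
cutting it there. Conversely, `𝒮(t)u` is approximated within `ε` in every coordinate by a single
partition (a common refinement of coordinatewise near-optimal ones), and the constant-shift
inequality transports this error through `ℰ_π` for any partition `π` of `[0, s]`.
-/

open NormedSpace Matrix

namespace Matrix

variable {m n : Type*} [Fintype n]

theorem mulVec_monotone {A : Matrix m n ℝ} (hA : ∀ i j, 0 ≤ A i j) : Monotone (A *ᵥ ·) :=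
  fun _ _ huv i => Finset.sum_le_sum fun j _ => mul_le_mul_of_nonneg_left (huv j) (hA i j)

variable [DecidableEq n]

theorem hasSum_exp_series (M : Matrix n n ℝ) :
    HasSum (fun k : ℕ => (k.factorial⁻¹ : ℝ) • M ^ k) (exp M) := by
  open scoped Matrix.Norms.Operator in exact exp_series_hasSum_exp' M

theorem exp_apply_nonneg {M : Matrix n n ℝ} (hM : ∀ i j, 0 ≤ M i j) (i j : n) :
    0 ≤ exp M i j :=
  (Pi.hasSum.1 (Pi.hasSum.1 M.hasSum_exp_series i) j).nonneg fun k =>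
    mul_nonneg (by positivity) (pow_apply_nonneg hM k i j)

theorem exp_mulVec_of_mulVec_eq_zero {M : Matrix n n ℝ} {v : n → ℝ} (hv : M *ᵥ v = 0) :
    exp M *ᵥ v = v := by
  have hsum := M.hasSum_exp_series.map ((mulVecBilin ℝ ℝ).flip v)
    (LinearMap.continuous_of_finiteDimensional _)
  -- only the `k = 0` term of the exponential series survives
  refine hsum.unique (hasSum_single 0 fun k hk => ?_) |>.trans ?_
  · obtain ⟨k, rfl⟩ := Nat.exists_eq_succ_of_ne_zero hk
    simp [pow_succ, hv]
  · simp [LinearMap.flip_apply]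

theorem exp_smul_add (q : Matrix n n ℝ) (a b : ℝ) :
    exp ((a + b) • q) = exp (a • q) * exp (b • q) := by
  rw [add_smul, exp_add_of_commute _ _ ((Commute.refl q).smul_left a |>.smul_right b)]

theorem continuous_exp_smul (q : Matrix n n ℝ) : Continuous fun s : ℝ => exp (s • q) := by
  open scoped Matrix.Norms.Operator in
  exact exp_continuous.comp (continuous_id.smul continuous_const)

theorem integral_exp_smul_mulVec_add (q : Matrix n n ℝ) (v : n → ℝ) (a b : ℝ) :
    ∫ s in (0 : ℝ)..a + b, exp (s • q) *ᵥ v =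
      (∫ s in (0 : ℝ)..a, exp (s • q) *ᵥ v) +
        exp (a • q) *ᵥ ∫ s in (0 : ℝ)..b, exp (s • q) *ᵥ v := by
  have hint (x y : ℝ) : IntervalIntegrable (fun s => exp (s • q) *ᵥ v) MeasureTheory.volume x y :=
    ((continuous_exp_smul q).matrix_mulVec continuous_const).intervalIntegrable x y
  rw [← intervalIntegral.integral_add_adjacent_intervals (hint 0 a) (hint a (a + b))]
  congr 1
  let L := (mulVecLin (exp (a • q))).toContinuousLinearMap
  calc ∫ s in a..a + b, exp (s • q) *ᵥ v
      = ∫ s in (0 : ℝ)..b, L (exp (s • q) *ᵥ v) := by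
        simp only [L, LinearMap.coe_toContinuousLinearMap', mulVecLin_apply, mulVec_mulVec,
          ← exp_smul_add]
        rw [intervalIntegral.integral_comp_add_left (fun s => exp (s • q) *ᵥ v) a, add_zero]
    _ = L (∫ s in (0 : ℝ)..b, exp (s • q) *ᵥ v) := L.intervalIntegral_comp_comm (hint 0 b)

end Matrix

namespace IsQMatrix

variable {d : ℕ} {q : Matrix (Fin d) (Fin d) ℝ}

theorem exp_smul_apply_nonneg (hq : IsQMatrix q) {t : ℝ} (ht : 0 ≤ t) (i j : Fin d) :
    0 ≤ exp (t • q) i j := by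
  obtain ⟨hdiag, hoff, -⟩ := hq
  -- `t • q = -(t * a) • 1 + t • (q + a • 1)`, a sum of commuting matrices, the second one
  -- entrywise nonnegative
  set a : ℝ := ∑ k, -q k k
  have hshift : ∀ i j, 0 ≤ (t • (q + a • 1)) i j := by
    intro i j
    refine mul_nonneg ht ?_
    rcases eq_or_ne i j with rfl | hij
    · have : -q i i ≤ a :=
        Finset.single_le_sum (fun k _ => neg_nonneg.2 (hdiag k)) (Finset.mem_univ i)
      simp only [Matrix.add_apply, Matrix.smul_apply, one_apply_eq, smul_eq_mul, mul_one]
      linarith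
    · simpa [Matrix.one_apply_ne hij] using hoff i j hij
  have hsplit : t • q = Matrix.diagonal (fun _ => -(t * a)) + t • (q + a • 1) := by
    rw [← Matrix.smul_one_eq_diagonal]; module
  have hcomm : Commute (Matrix.diagonal fun _ => -(t * a)) (t • (q + a • 1)) := by
    rw [← Matrix.smul_one_eq_diagonal]; exact (Commute.one_left _).smul_left _
  rw [hsplit, Matrix.exp_add_of_commute _ _ hcomm, Matrix.exp_diagonal, Matrix.diagonal_mul,
    Pi.exp_def, ← Real.exp_eq_exp_ℝ]
  exact mul_nonneg (Real.exp_pos _).le (Matrix.exp_apply_nonneg hshift i j)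

theorem exp_smul_mulVec_const (hq : IsQMatrix q) (t c : ℝ) :
    exp (t • q) *ᵥ (fun _ => c) = fun _ => c := by
  refine Matrix.exp_mulVec_of_mulVec_eq_zero ?_
  ext i
  simp [mulVec, dotProduct, ← Finset.sum_mul, ← Finset.mul_sum, hq.2.2 i]

end IsQMatrix

section Sq

variable {d : ℕ} {q : Matrix (Fin d) (Fin d) ℝ} {g : Fin d → ℝ}

theorem Sq_add (a b : ℝ) (u : Fin d → ℝ) : Sq q g (a + b) u = Sq q g a (Sq q g b u) := by
  simp only [Sq, exp_smul_add, integral_exp_smul_mulVec_add, mulVec_add, ← mulVec_mulVec]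
  abel

theorem Sq_monotone (hq : IsQMatrix q) {h : ℝ} (hh : 0 ≤ h) : Monotone (Sq q g h) :=
  fun _ _ huv => add_le_add_left (mulVec_monotone (hq.exp_smul_apply_nonneg hh) huv) _

theorem Sq_add_const (hq : IsQMatrix q) (h c : ℝ) (u : Fin d → ℝ) :
    Sq q g h (u + fun _ => c) = Sq q g h u + fun _ => c := by
  simp only [Sq, mulVec_add, hq.exp_smul_mulVec_const]
  abel

end Sq

structure IsMonotoneSubsemigroup {ι : Type*} (E : ℝ → (ι → ℝ) → ι → ℝ) : Prop where
  monotone {h : ℝ} : 0 ≤ h → Monotone (E h)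
  le_comp {a b : ℝ} : 0 ≤ a → 0 ≤ b → ∀ u, E (a + b) u ≤ E a (E b u)
  add_const_le {h : ℝ} : 0 ≤ h → ∀ u c, E h (u + fun _ => c) ≤ E h u + fun _ => c

section Eop

variable {d : ℕ} {P : Set (Matrix (Fin d) (Fin d) ℝ)} {f : Matrix (Fin d) (Fin d) ℝ → Fin d → ℝ}

theorem Sq_le_Eop (hEfin : ∀ h : ℝ, 0 ≤ h → ∀ (u : Fin d → ℝ) (i : Fin d),
      BddAbove ((fun q => Sq q (f q) h u i) '' P))
    {q : Matrix (Fin d) (Fin d) ℝ} (hq : q ∈ P) {h : ℝ} (hh : 0 ≤ h) (u : Fin d → ℝ) :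
    Sq q (f q) h u ≤ Eop P f h u :=
  fun i => le_csSup (hEfin h hh u i) ⟨q, hq, rfl⟩

theorem Eop_le (hne : P.Nonempty) {h : ℝ} {u : Fin d → ℝ} {i : Fin d} {c : ℝ}
    (hc : ∀ q ∈ P, Sq q (f q) h u i ≤ c) : Eop P f h u i ≤ c :=
  csSup_le (hne.image _) (Set.forall_mem_image.2 hc)

theorem isMonotoneSubsemigroup_Eop (hne : P.Nonempty) (hQ : ∀ q ∈ P, IsQMatrix q)
    (hEfin : ∀ h : ℝ, 0 ≤ h → ∀ (u : Fin d → ℝ) (i : Fin d),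
      BddAbove ((fun q => Sq q (f q) h u i) '' P)) :
    IsMonotoneSubsemigroup (Eop P f) where
  monotone hh _ _ huv i := Eop_le hne fun q hq =>
    (Sq_monotone (hQ q hq) hh huv i).trans (Sq_le_Eop hEfin hq hh _ i)
  le_comp ha hb u i := Eop_le hne fun q hq => by
    rw [Sq_add]
    exact (Sq_monotone (hQ q hq) ha (Sq_le_Eop hEfin hq hb u) i).trans (Sq_le_Eop hEfin hq ha _ i)
  add_const_le hh u c i := Eop_le hne fun q hq => by
    rw [Sq_add_const (hQ q hq)]
    exact add_le_add_left (Sq_le_Eop hEfin hq hh u i) c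

end Eop

theorem listGaps_cons_cons (a b : ℝ) (l : List ℝ) :
    listGaps (a :: b :: l) = (b - a) :: listGaps (b :: l) := rfl

theorem listGaps_nonneg : ∀ {l : List ℝ}, l.Pairwise (· ≤ ·) → ∀ g ∈ listGaps l, 0 ≤ g
  | [], _ | [_], _ => by simp [listGaps]
  | a :: b :: l, hl => by
    rw [listGaps_cons_cons, List.forall_mem_cons]
    exact ⟨sub_nonneg.2 (List.rel_of_pairwise_cons hl (by simp)), listGaps_nonneg hl.of_cons⟩

theorem listGaps_map_add (c : ℝ) (l : List ℝ) : listGaps (l.map (c + ·)) = listGaps l := by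
  simp [listGaps, ← List.map_tail, List.zipWith_map]

theorem listGaps_append_cons (s : ℝ) (m : List ℝ) :
    ∀ l : List ℝ, listGaps (l ++ s :: m) = listGaps (l ++ [s]) ++ listGaps (s :: m)
  | [] => by simp [listGaps]
  | [_] => rfl
  | a :: b :: l => by
    have ih := listGaps_append_cons s m (b :: l)
    simp only [List.cons_append, listGaps_cons_cons] at ih ⊢
    rw [ih]

def compList {α : Type*} (E : ℝ → α → α) (gs : List ℝ) : α → α :=
  (gs.map E).foldr (· ∘ ·) id

section compList

variable {α : Type*} {E : ℝ → α → α}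

theorem compList_cons (g : ℝ) (gs : List ℝ) : compList E (g :: gs) = E g ∘ compList E gs := rfl

theorem compList_append (gs₁ gs₂ : List ℝ) :
    compList E (gs₁ ++ gs₂) = compList E gs₁ ∘ compList E gs₂ := by
  induction gs₁ with
  | nil => rfl
  | cons g gs ih => rw [List.cons_append, compList_cons, compList_cons, ih, Function.comp_assoc]

theorem Epart_eq_compList {d : ℕ} (E : ℝ → (Fin d → ℝ) → Fin d → ℝ) (π : Finset ℝ) :
    Epart E π = compList E (listGaps (π.sort (· ≤ ·))) := rfl

end compList

namespace IsMonotoneSubsemigroup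

variable {ι : Type*} {E : ℝ → (ι → ℝ) → ι → ℝ}

theorem compList_monotone (hE : IsMonotoneSubsemigroup E) :
    ∀ {gs : List ℝ}, (∀ g ∈ gs, 0 ≤ g) → Monotone (compList E gs)
  | [], _ => monotone_id
  | _ :: _, hgs => by
    rw [List.forall_mem_cons] at hgs
    exact (hE.monotone hgs.1).comp (hE.compList_monotone hgs.2)

theorem compList_add_const_le (hE : IsMonotoneSubsemigroup E) :
    ∀ {gs : List ℝ}, (∀ g ∈ gs, 0 ≤ g) → ∀ u c,
      compList E gs (u + fun _ => c) ≤ compList E gs u + fun _ => c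
  | [], _, _, _ => le_rfl
  | _ :: _, hgs, u, c => by
    rw [List.forall_mem_cons] at hgs
    exact (hE.monotone hgs.1 (hE.compList_add_const_le hgs.2 u c)).trans
      (hE.add_const_le hgs.1 _ c)

theorem compList_listGaps_le_orderedInsert (hE : IsMonotoneSubsemigroup E) {r : ℝ} :
    ∀ {a : ℝ} {l : List ℝ}, (a :: l).Pairwise (· ≤ ·) → a < r → (∃ b ∈ l, r ≤ b) → ∀ u,
      compList E (listGaps (a :: l)) u ≤ compList E (listGaps (a :: l.orderedInsert (· ≤ ·) r)) u
  | _, [], _, _, ⟨_, hb, _⟩, _ => absurd hb List.not_mem_nil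
  | a, b :: l, hl, har, hb, u => by
    have hab : a ≤ b := List.rel_of_pairwise_cons hl (by simp)
    by_cases hrb : r ≤ b
    · simp only [List.orderedInsert_cons, hrb, if_true, listGaps_cons_cons, compList_cons,
        Function.comp_apply]
      rw [← sub_add_sub_cancel' r a b]
      exact hE.le_comp (sub_nonneg.2 har.le) (sub_nonneg.2 hrb) _
    · have hb' : ∃ b' ∈ l, r ≤ b' := by
        obtain ⟨b', hb', hrb'⟩ := hb
        refine ⟨b', (List.mem_cons.1 hb').resolve_left ?_, hrb'⟩
        rintro rfl
        exact hrb hrb'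
      simp only [List.orderedInsert_cons, hrb, if_false, listGaps_cons_cons, compList_cons,
        Function.comp_apply]
      exact hE.monotone (sub_nonneg.2 hab)
        (hE.compList_listGaps_le_orderedInsert hl.of_cons (not_le.1 hrb) hb' u)

end IsMonotoneSubsemigroup

namespace Finset

variable {α : Type*} [LinearOrder α]

theorem sort_eq_of_pairwise_lt {s : Finset α} {l : List α} (hl : l.Pairwise (· < ·))
    (hmem : ∀ x, x ∈ l ↔ x ∈ s) : s.sort (· ≤ ·) = l :=
  s.sortedLT_sort.pairwise.eq_of_mem_iff hl fun x => by simpa using (hmem x).symm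

theorem sort_eq_sort_append_cons_sort {σ A B : Finset α} {s : α} (hA : ∀ x ∈ A, x < s)
    (hB : ∀ x ∈ B, s < x) (hσ : ∀ x, x ∈ σ ↔ x ∈ A ∨ x = s ∨ x ∈ B) :
    σ.sort (· ≤ ·) = A.sort (· ≤ ·) ++ s :: B.sort (· ≤ ·) := by
  refine sort_eq_of_pairwise_lt ?_ fun x => by simp [hσ]
  simp only [List.pairwise_append, List.pairwise_cons, List.mem_cons, mem_sort]
  refine ⟨A.sortedLT_sort.pairwise, ⟨fun x hx => hB x hx, B.sortedLT_sort.pairwise⟩, ?_⟩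
  rintro a ha b (rfl | hb)
  · exact hA a ha
  · exact (hA a ha).trans (hB b hb)

theorem sort_insert_eq_orderedInsert [DecidableEq α] {s : Finset α} {r : α} (hr : r ∉ s) :
    (insert r s).sort (· ≤ ·) = (s.sort (· ≤ ·)).orderedInsert (· ≤ ·) r := by
  have hperm := List.perm_orderedInsert (· ≤ ·) r (s.sort (· ≤ ·))
  have hnodup := hperm.nodup_iff.2 (List.nodup_cons.2 ⟨by simpa using hr, sort_nodup _ _⟩)
  have hset : ((s.sort (· ≤ ·)).orderedInsert (· ≤ ·) r).toFinset = insert r s := by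
    ext x; simp [hperm.mem_iff]
  rw [← hset]
  exact (List.toFinset_sort _ hnodup).2 ((s.pairwise_sort _).orderedInsert r _)

end Finset

section Epart

open Finset

variable {d : ℕ} {E : ℝ → (Fin d → ℝ) → Fin d → ℝ}

theorem Epart_singleton (a : ℝ) : Epart E {a} = id := by
  rw [Epart_eq_compList, sort_singleton]
  rfl

theorem Epart_map_addLeftEmbedding (c : ℝ) (π : Finset ℝ) :
    Epart E (π.map (addLeftEmbedding c)) = Epart E π := by
  have hmono : StrictMono (addLeftEmbedding c) := fun _ _ h => add_lt_add_right h c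
  rw [Epart_eq_compList, Epart_eq_compList, ← (hmono.strictMonoOn _).map_finsetSort]
  exact congrArg _ (listGaps_map_add c _)

theorem Epart_eq_comp_filter {π : Finset ℝ} {s : ℝ} (hs : s ∈ π) :
    Epart E π = Epart E (π.filter (· ≤ s)) ∘ Epart E (π.filter (s ≤ ·)) := by
  have hlt : ∀ x ∈ π.filter (· < s), x < s := fun x hx => (mem_filter.1 hx).2
  have hgt : ∀ x ∈ π.filter (s < ·), s < x := fun x hx => (mem_filter.1 hx).2
  have hπ := sort_eq_sort_append_cons_sort (σ := π) hlt hgt fun x => by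
    simp only [mem_filter]; grind
  have hle := sort_eq_sort_append_cons_sort (σ := π.filter (· ≤ s)) hlt (B := ∅) (by simp)
    fun x => by simp only [mem_filter, notMem_empty]; grind
  have hge := sort_eq_sort_append_cons_sort (σ := π.filter (s ≤ ·)) (A := ∅) (by simp) hgt
    fun x => by simp only [mem_filter, notMem_empty]; grind
  rw [Epart_eq_compList, Epart_eq_compList, Epart_eq_compList, hπ, hle, hge, sort_empty,
    List.nil_append, listGaps_append_cons, compList_append]

end Epart

namespace IsMonotoneSubsemigroup

open Finset

variable {d : ℕ} {E : ℝ → (Fin d → ℝ) → Fin d → ℝ}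

theorem Epart_monotone (hE : IsMonotoneSubsemigroup E) (π : Finset ℝ) : Monotone (Epart E π) :=
  hE.compList_monotone (listGaps_nonneg (π.pairwise_sort _))

theorem Epart_add_const_le (hE : IsMonotoneSubsemigroup E) (π : Finset ℝ) (u : Fin d → ℝ)
    (c : ℝ) : Epart E π (u + fun _ => c) ≤ Epart E π u + fun _ => c :=
  hE.compList_add_const_le (listGaps_nonneg (π.pairwise_sort _)) u c

theorem Epart_le_Epart_insert (hE : IsMonotoneSubsemigroup E) {π : Finset ℝ} {r : ℝ}
    (hlo : ∃ a ∈ π, a ≤ r) (hhi : ∃ b ∈ π, r ≤ b) (u : Fin d → ℝ) :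
    Epart E π u ≤ Epart E (insert r π) u := by
  by_cases hr : r ∈ π
  · rw [insert_eq_of_mem hr]
  obtain ⟨a₀, l, hsort⟩ := List.exists_cons_of_ne_nil (l := π.sort (· ≤ ·)) (by
    obtain ⟨a, ha, -⟩ := hlo
    exact List.ne_nil_of_mem ((mem_sort _).2 ha))
  have hpw : (a₀ :: l).Pairwise (· ≤ ·) := hsort ▸ π.pairwise_sort _
  have hmem : ∀ x, x ∈ a₀ :: l ↔ x ∈ π := fun x => by rw [← hsort, mem_sort]
  have ha₀r : a₀ < r := by
    obtain ⟨a, ha, har⟩ := hlo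
    refine lt_of_le_of_ne ?_ fun h => hr (h ▸ (hmem a₀).1 List.mem_cons_self)
    rcases List.mem_cons.1 ((hmem a).2 ha) with rfl | ha'
    · exact har
    · exact (List.rel_of_pairwise_cons hpw ha').trans har
  have hhi' : ∃ b ∈ l, r ≤ b := by
    obtain ⟨b, hb, hrb⟩ := hhi
    refine ⟨b, (List.mem_cons.1 ((hmem b).2 hb)).resolve_left ?_, hrb⟩
    rintro rfl
    exact (ha₀r.trans_le hrb).false
  rw [Epart_eq_compList, Epart_eq_compList, sort_insert_eq_orderedInsert hr, hsort,
    List.orderedInsert_cons, if_neg (not_le.2 ha₀r)]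
  exact hE.compList_listGaps_le_orderedInsert hpw ha₀r hhi' u

theorem Epart_le_Epart_of_subset (hE : IsMonotoneSubsemigroup E) {π π' : Finset ℝ} {a b : ℝ}
    (ha : a ∈ π) (hb : b ∈ π) (hπ' : ∀ x ∈ π', x ∈ Set.Icc a b) (hsub : π ⊆ π')
    (u : Fin d → ℝ) : Epart E π u ≤ Epart E π' u := by
  suffices ∀ σ : Finset ℝ, (∀ x ∈ σ, x ∈ Set.Icc a b) → Epart E π u ≤ Epart E (π ∪ σ) u by
    simpa [union_sdiff_of_subset hsub] using this (π' \ π) fun x hx => hπ' x (mem_sdiff.1 hx).1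
  intro σ hσ
  induction σ using Finset.induction_on with
  | empty => simp
  | insert r σ _ ih =>
    rw [forall_mem_insert] at hσ
    rw [union_insert]
    exact (ih hσ.2).trans (hE.Epart_le_Epart_insert ⟨a, mem_union_left _ ha, hσ.1.1⟩
      ⟨b, mem_union_left _ hb, hσ.1.2⟩ u)

end IsMonotoneSubsemigroup

section partitionsTo

open Finset

theorem pair_mem_partitionsTo {t : ℝ} (ht : 0 ≤ t) : ({0, t} : Finset ℝ) ∈ partitionsTo t :=
  ⟨by simp, by simp, by simp [ht]⟩

theorem partitionsTo_nonempty {t : ℝ} (ht : 0 ≤ t) : (partitionsTo t).Nonempty :=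
  ⟨_, pair_mem_partitionsTo ht⟩

theorem partitionsTo_zero : partitionsTo 0 = {{0}} := by
  ext π
  simp only [partitionsTo, Set.Icc_self, Set.mem_singleton_iff, Set.mem_ofPred_eq]
  constructor
  · rintro ⟨h0, -, hπ⟩
    ext x
    exact ⟨fun hx => mem_singleton.2 (hπ x hx), fun hx => mem_singleton.1 hx ▸ h0⟩
  · rintro rfl
    simp

theorem insert_mem_partitionsTo {t r : ℝ} {π : Finset ℝ} (hπ : π ∈ partitionsTo t)
    (hr : r ∈ Set.Icc 0 t) : insert r π ∈ partitionsTo t :=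
  ⟨mem_insert_of_mem hπ.1, mem_insert_of_mem hπ.2.1, (forall_mem_insert _ _ _).2 ⟨hr, hπ.2.2⟩⟩

theorem filter_le_mem_partitionsTo {s t : ℝ} {π : Finset ℝ} (hπ : π ∈ partitionsTo t)
    (hs : s ∈ π) : π.filter (· ≤ s) ∈ partitionsTo s := by
  obtain ⟨h0, -, hπ⟩ := hπ
  refine ⟨mem_filter.2 ⟨h0, (hπ s hs).1⟩, mem_filter.2 ⟨hs, le_rfl⟩, fun x hx => ?_⟩
  rw [mem_filter] at hx
  exact ⟨(hπ x hx.1).1, hx.2⟩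

theorem map_filter_ge_mem_partitionsTo {s t : ℝ} {π : Finset ℝ}
    (hπ : π ∈ partitionsTo (s + t)) (hs : s ∈ π) :
    (π.filter (s ≤ ·)).map (addLeftEmbedding (-s)) ∈ partitionsTo t := by
  obtain ⟨-, hst, hπ⟩ := hπ
  refine ⟨mem_map.2 ⟨s, mem_filter.2 ⟨hs, le_rfl⟩, neg_add_cancel s⟩,
    mem_map.2 ⟨s + t, mem_filter.2 ⟨hst, (hπ s hs).2⟩, neg_add_cancel_left s t⟩, ?_⟩
  simp only [mem_map, mem_filter, addLeftEmbedding_apply]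
  rintro _ ⟨x, ⟨hx, hsx⟩, rfl⟩
  constructor <;> linarith [(hπ x hx).2]

theorem union_map_mem_partitionsTo {s t : ℝ} {π₁ π₂ : Finset ℝ} (h₁ : π₁ ∈ partitionsTo s)
    (h₂ : π₂ ∈ partitionsTo t) : π₁ ∪ π₂.map (addLeftEmbedding s) ∈ partitionsTo (s + t) := by
  obtain ⟨h₁0, h₁s, h₁⟩ := h₁
  obtain ⟨-, h₂t, h₂⟩ := h₂
  refine ⟨mem_union_left _ h₁0, mem_union_right _ (mem_map_of_mem _ h₂t), ?_⟩
  simp only [mem_union, mem_map, addLeftEmbedding_apply]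
  have hs := (h₁ s h₁s).1
  have ht := (h₂ t h₂t).1
  rintro _ (hx | ⟨y, hy, rfl⟩)
  · obtain ⟨hx0, hxs⟩ := h₁ _ hx
    constructor <;> linarith
  · obtain ⟨hy0, hyt⟩ := h₂ y hy
    constructor <;> linarith

variable {d : ℕ} {E : ℝ → (Fin d → ℝ) → Fin d → ℝ}

theorem Epart_union_map_addLeftEmbedding {s t : ℝ} {π₁ π₂ : Finset ℝ}
    (h₁ : π₁ ∈ partitionsTo s) (h₂ : π₂ ∈ partitionsTo t) :
    Epart E (π₁ ∪ π₂.map (addLeftEmbedding s)) = Epart E π₁ ∘ Epart E π₂ := by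
  obtain ⟨-, h₁s, h₁⟩ := h₁
  obtain ⟨h₂0, -, h₂⟩ := h₂
  simp only [Set.mem_Icc] at h₁ h₂
  have hleft : (π₁ ∪ π₂.map (addLeftEmbedding s)).filter (· ≤ s) = π₁ := by
    ext x
    simp only [mem_filter, mem_union, mem_map, addLeftEmbedding_apply]
    grind
  have hright :
      (π₁ ∪ π₂.map (addLeftEmbedding s)).filter (s ≤ ·) = π₂.map (addLeftEmbedding s) := by
    ext x
    simp only [mem_filter, mem_union, mem_map, addLeftEmbedding_apply]
    grind
  rw [Epart_eq_comp_filter (mem_union_left _ h₁s), hleft, hright, Epart_map_addLeftEmbedding]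

end partitionsTo

section NisioS

open Finset

variable {d : ℕ} {P : Set (Matrix (Fin d) (Fin d) ℝ)} {f : Matrix (Fin d) (Fin d) ℝ → Fin d → ℝ}

theorem NisioS_zero (u : Fin d → ℝ) : NisioS P f 0 u = u := by
  ext i
  simp [NisioS, partitionsTo_zero, Epart_singleton]

theorem NisioS_le {t : ℝ} (ht : 0 ≤ t) {u : Fin d → ℝ} {i : Fin d} {c : ℝ}
    (hc : ∀ π ∈ partitionsTo t, Epart (Eop P f) π u i ≤ c) : NisioS P f t u i ≤ c :=
  csSup_le ((partitionsTo_nonempty ht).image _) (Set.forall_mem_image.2 hc)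

theorem exists_partition_NisioS_le_add (hE : IsMonotoneSubsemigroup (Eop P f)) {t : ℝ}
    (ht : 0 ≤ t) (u : Fin d → ℝ) {ε : ℝ} (hε : 0 < ε) :
    ∃ π ∈ partitionsTo t, NisioS P f t u ≤ Epart (Eop P f) π u + fun _ => ε := by
  have hpick (i : Fin d) : ∃ π ∈ partitionsTo t, NisioS P f t u i - ε < Epart (Eop P f) π u i := by
    obtain ⟨_, ⟨π, hπ, rfl⟩, hlt⟩ := exists_lt_of_lt_csSup
      ((partitionsTo_nonempty ht).image _)
      (sub_lt_self (NisioS P f t u i) hε)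
    exact ⟨π, hπ, hlt⟩
  choose π hπ hlt using hpick
  -- a common refinement of the `π i` serves all coordinates at once
  set σ := {0, t} ∪ univ.biUnion π
  have hσ : σ ∈ partitionsTo t := by
    refine ⟨mem_union_left _ (by simp), mem_union_left _ (by simp), fun x hx => ?_⟩
    rcases mem_union.1 hx with hx | hx
    · exact (pair_mem_partitionsTo ht).2.2 x hx
    · obtain ⟨i, -, hx⟩ := mem_biUnion.1 hx
      exact (hπ i).2.2 x hx
  refine ⟨σ, hσ, fun i => ?_⟩
  have hle := hE.Epart_le_Epart_of_subset (hπ i).1 (hπ i).2.1 hσ.2.2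
    (subset_union_right.trans' (subset_biUnion_of_mem π (mem_univ i))) u i
  show NisioS P f t u i ≤ Epart (Eop P f) σ u i + ε
  linarith [hlt i]

variable (hSfin : ∀ t : ℝ, 0 ≤ t → ∀ (u : Fin d → ℝ) (i : Fin d),
  BddAbove ((fun pa => Epart (Eop P f) pa u i) '' partitionsTo t))
include hSfin

theorem Epart_le_NisioS {t : ℝ} (ht : 0 ≤ t) {π : Finset ℝ} (hπ : π ∈ partitionsTo t)
    (u : Fin d → ℝ) : Epart (Eop P f) π u ≤ NisioS P f t u :=
  fun i => le_csSup (hSfin t ht u i) ⟨π, hπ, rfl⟩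

theorem NisioS_add_le (hE : IsMonotoneSubsemigroup (Eop P f)) {s t : ℝ} (hs : 0 ≤ s)
    (ht : 0 ≤ t) (u : Fin d → ℝ) : NisioS P f (s + t) u ≤ NisioS P f s (NisioS P f t u) := by
  intro i
  refine NisioS_le (add_nonneg hs ht) fun π hπ => ?_
  have hπs : insert s π ∈ partitionsTo (s + t) :=
    insert_mem_partitionsTo hπ ⟨hs, le_add_of_nonneg_right ht⟩
  have hsplit := Epart_eq_comp_filter (E := Eop P f) (mem_insert_self s π)
  rw [← Epart_map_addLeftEmbedding (-s) ((insert s π).filter (s ≤ ·))] at hsplit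
  calc Epart (Eop P f) π u i
      ≤ Epart (Eop P f) (insert s π) u i :=
        hE.Epart_le_Epart_insert ⟨0, hπ.1, hs⟩ ⟨s + t, hπ.2.1, le_add_of_nonneg_right ht⟩ u i
    _ ≤ Epart (Eop P f) ((insert s π).filter (· ≤ s)) (NisioS P f t u) i := by
        rw [hsplit]
        exact hE.Epart_monotone _
          (Epart_le_NisioS hSfin ht (map_filter_ge_mem_partitionsTo hπs (mem_insert_self s π)) u) i
    _ ≤ NisioS P f s (NisioS P f t u) i :=
        Epart_le_NisioS hSfin hs (filter_le_mem_partitionsTo hπs (mem_insert_self s π)) _ i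

theorem NisioS_comp_le (hE : IsMonotoneSubsemigroup (Eop P f)) {s t : ℝ} (hs : 0 ≤ s)
    (ht : 0 ≤ t) (u : Fin d → ℝ) : NisioS P f s (NisioS P f t u) ≤ NisioS P f (s + t) u := by
  intro i
  refine NisioS_le hs fun π₁ hπ₁ => le_of_forall_pos_le_add fun ε hε => ?_
  obtain ⟨π₂, hπ₂, hclose⟩ := exists_partition_NisioS_le_add hE ht u hε
  calc Epart (Eop P f) π₁ (NisioS P f t u) i
      ≤ Epart (Eop P f) π₁ (Epart (Eop P f) π₂ u + fun _ => ε) i := hE.Epart_monotone π₁ hclose i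
    _ ≤ Epart (Eop P f) π₁ (Epart (Eop P f) π₂ u) i + ε := hE.Epart_add_const_le π₁ _ ε i
    _ = Epart (Eop P f) (π₁ ∪ π₂.map (addLeftEmbedding s)) u i + ε := by
        rw [Epart_union_map_addLeftEmbedding hπ₁ hπ₂, Function.comp_apply]
    _ ≤ NisioS P f (s + t) u i + ε := add_le_add_left (Epart_le_NisioS hSfin (add_nonneg hs ht)
        (union_map_mem_partitionsTo hπ₁ hπ₂) u i) ε

end NisioS

theorem nisio_semigroup_property_general {d : ℕ}
    (P : Set (Matrix (Fin d) (Fin d) ℝ)) (hne : P.Nonempty)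
    (hQ : ∀ q ∈ P, IsQMatrix q)
    (f : Matrix (Fin d) (Fin d) ℝ → Fin d → ℝ)
    (hEfin : ∀ h : ℝ, 0 ≤ h → ∀ (u : Fin d → ℝ) (i : Fin d),
      BddAbove ((fun q => Sq q (f q) h u i) '' P))
    (hSfin : ∀ t : ℝ, 0 ≤ t → ∀ (u : Fin d → ℝ) (i : Fin d),
      BddAbove ((fun pa => Epart (Eop P f) pa u i) '' partitionsTo t)) :
    (∀ u : Fin d → ℝ, NisioS P f 0 u = u) ∧
    (∀ s t : ℝ, 0 ≤ s → 0 ≤ t → ∀ u : Fin d → ℝ,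
      NisioS P f (s + t) u = NisioS P f s (NisioS P f t u)) := by
  have hE := isMonotoneSubsemigroup_Eop hne hQ hEfin
  exact ⟨NisioS_zero, fun s t hs ht u =>
    (NisioS_add_le hSfin hE hs ht u).antisymm (NisioS_comp_le hSfin hE hs ht u)⟩

/-- The dynamic programming principle for the Nisio semigroup. -/
theorem nisio_semigroup_property {d : ℕ} (hd : 0 < d)
    (P : Set (Matrix (Fin d) (Fin d) ℝ)) (hne : P.Nonempty)
    (hQ : ∀ q ∈ P, IsQMatrix q)
    (f : Matrix (Fin d) (Fin d) ℝ → Fin d → ℝ)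
    (hf0 : ∀ q ∈ P, f q ≤ 0)
    (hq₀ : ∃ q₀ ∈ P, f q₀ = 0)
    (hEfin : ∀ h : ℝ, 0 ≤ h → ∀ (u : Fin d → ℝ) (i : Fin d),
      BddAbove ((fun q => Sq q (f q) h u i) '' P))
    (hSfin : ∀ t : ℝ, 0 ≤ t → ∀ (u : Fin d → ℝ) (i : Fin d),
      BddAbove ((fun pa => Epart (Eop P f) pa u i) '' partitionsTo t)) :
    (∀ u : Fin d → ℝ, NisioS P f 0 u = u) ∧
    (∀ s t : ℝ, 0 ≤ s → 0 ≤ t → ∀ u : Fin d → ℝ,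
      NisioS P f (s + t) u = NisioS P f s (NisioS P f t u)) :=
  nisio_semigroup_property_general P hne hQ f hEfin hSfin
end

section
/- Let Q : ℝ^d → ℝ^d be a convex Q-operator. Then Q is locally Lipschitz continuous, and for every u₀ ∈ ℝ^d there exists a Q-matrix q ∈ ℝ^{d×d} with finite conjugate f_q := −sup_u(qu − Qu) such that Qu₀ = qu₀ + f_q; that is, the supremum in the dual representation Qu₀ = sup_{q}(qu₀ + f_q) over matrices with finite conjugate is attained, simultaneously in all components, by a single Q-matrix. In particular there exists q₀ with f_{q₀} = 0. -/
lemma exists_subgradient {d : ℕ} (f : (Fin d → ℝ) → ℝ) (hf : ConvexOn ℝ Set.univ f)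
    (u₀ : Fin d → ℝ) :
    ∃ g : (Fin d → ℝ) →ₗ[ℝ] ℝ, ∀ u, f u₀ + (g u - g u₀) ≤ f u := by
  have hcont : Continuous f := hf.locallyLipschitz.continuous
  set s : Set ((Fin d → ℝ) × ℝ) := {p | f p.1 < p.2} with hs
  have hsopen : IsOpen s := isOpen_lt (hcont.comp continuous_fst) continuous_snd
  have hsconv : Convex ℝ s := by
    rintro ⟨p1, p2⟩ hp ⟨q1, q2⟩ hq a b ha hb hab
    simp only [hs, Set.mem_setOf_eq] at hp hq ⊢
    have h1 : f (a • p1 + b • q1) ≤ a * f p1 + b * f q1 :=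
      hf.2 (Set.mem_univ _) (Set.mem_univ _) ha hb hab
    have h2 : a * f p1 + b * f q1 < a * p2 + b * q2 := by
      rcases eq_or_lt_of_le ha with h | h
      · have hb1 : b = 1 := by linarith
        simp only [← h, hb1, zero_mul, one_mul, zero_add]; exact hq
      · rcases eq_or_lt_of_le hb with h' | h'
        · have ha1 : a = 1 := by linarith
          simp only [← h', ha1, zero_mul, one_mul, add_zero]; exact hp
        · have h3 := mul_lt_mul_of_pos_left hp h
          have h4 := mul_lt_mul_of_pos_left hq h'
          linarith
    exact lt_of_le_of_lt h1 h2
  have hx : ((u₀, f u₀) : (Fin d → ℝ) × ℝ) ∉ s := by simp [hs]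
  obtain ⟨φ, hφ⟩ := geometric_hahn_banach_open_point hsconv hsopen hx
  set c : ℝ := φ (0, 1) with hcdef
  set L : (Fin d → ℝ) → ℝ := fun u => φ (u, 0) with hLdef
  have hdec : ∀ (u : Fin d → ℝ) (t : ℝ), φ (u, t) = L u + t * c := by
    intro u t
    have h : ((u, t) : (Fin d → ℝ) × ℝ) = (u, 0) + t • ((0 : Fin d → ℝ), (1 : ℝ)) := by
      simp [Prod.ext_iff]
    rw [h, map_add, map_smul, smul_eq_mul]
  have key : ∀ (u : Fin d → ℝ) (t : ℝ), f u < t → L u + t * c < L u₀ + f u₀ * c := by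
    intro u t h
    have h2 := hφ (u, t) h
    rwa [hdec, hdec] at h2
  have hc : c < 0 := by
    have h := key u₀ (f u₀ + 1) (by linarith)
    nlinarith
  have hsub : ∀ u, L u + f u * c ≤ L u₀ + f u₀ * c := by
    intro u
    by_contra h
    push_neg at h
    set ε := (L u + f u * c - (L u₀ + f u₀ * c)) / (-c) with hε
    have hεpos : 0 < ε := div_pos (by linarith) (by linarith)
    have h2 := key u (f u + ε) (by linarith)
    have h3 : ε * (-c) = L u + f u * c - (L u₀ + f u₀ * c) :=
      div_mul_cancel₀ _ (by linarith)
    nlinarith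
  set a : ℝ := -1 / c with hadef
  have ha : 0 < a := div_pos_of_neg_of_neg (by norm_num) hc
  have hca : a * c = -1 := div_mul_cancel₀ _ hc.ne
  refine ⟨a • ((φ.comp (ContinuousLinearMap.inl ℝ (Fin d → ℝ) ℝ)).toLinearMap), fun u => ?_⟩
  have hkey := hsub u
  have e : ∀ x y : ℝ, a * (x + y * c) = a * x - y := fun x y => by linear_combination y * hca
  have h3 := mul_le_mul_of_nonneg_left hkey ha.le
  rw [e, e] at h3
  simp only [LinearMap.smul_apply, ContinuousLinearMap.coe_coe, ContinuousLinearMap.comp_apply,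
    ContinuousLinearMap.inl_apply, smul_eq_mul]
  linarith

/-- A convex `Q`-operator is locally Lipschitz, and its dual representation by
`Q`-matrices with finite conjugate is attained, simultaneously in all
components, by a single `Q`-matrix; in particular some `q₀` has zero penalty. -/
theorem convex_qOperator_dual_attained {d : ℕ} (hd : 0 < d)
    (Q : (Fin d → ℝ) → (Fin d → ℝ))
    (hQop : IsQOperator Q)
    (hconv : ∀ i, ConvexOn ℝ Set.univ (fun u => Q u i)) :
    LocallyLipschitz Q ∧
    (∀ u₀ : Fin d → ℝ, ∃ (q : Matrix (Fin d) (Fin d) ℝ) (fq : Fin d → ℝ),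
      IsQMatrix q ∧
      (∀ i, IsLUB (Set.range fun u : Fin d → ℝ => q.mulVec u i - Q u i) (-(fq i))) ∧
      Q u₀ = q.mulVec u₀ + fq) ∧
    (∃ q₀ : Matrix (Fin d) (Fin d) ℝ, IsQMatrix q₀ ∧
      ∀ i, IsLUB (Set.range fun u : Fin d → ℝ => q₀.mulVec u i - Q u i) 0) := by
  obtain ⟨hQ1, hQ2, hQ3⟩ := hQop
  have hlip : ∀ i, LocallyLipschitz fun u => Q u i := fun i => (hconv i).locallyLipschitz
  have hL : LocallyLipschitz Q := by
    intro x
    choose K t ht hK using fun i => hlip i x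
    refine ⟨Finset.univ.sup K, ⋂ i, t i, Filter.iInter_mem.mpr ht, ?_⟩
    intro u hu v hv
    rw [Set.mem_iInter] at hu hv
    refine edist_pi_le_iff.mpr fun i => ?_
    calc edist (Q u i) (Q v i) ≤ K i * edist u v := hK i (hu i) (hv i)
      _ ≤ ((Finset.univ.sup K : NNReal) : ENNReal) * edist u v := by
          gcongr
          exact Finset.le_sup (Finset.mem_univ i)
  have main : ∀ u₀ : Fin d → ℝ, ∃ (q : Matrix (Fin d) (Fin d) ℝ) (fq : Fin d → ℝ),
      IsQMatrix q ∧
      (∀ i, IsLUB (Set.range fun u : Fin d → ℝ => q.mulVec u i - Q u i) (-(fq i))) ∧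
      Q u₀ = q.mulVec u₀ + fq := by
    intro u₀
    choose g hg using fun i => exists_subgradient (fun u => Q u i) (hconv i) u₀
    set q : Matrix (Fin d) (Fin d) ℝ := fun i j => g i (Pi.single j 1) with hqdef
    have hmv : ∀ (u : Fin d → ℝ) i, q.mulVec u i = g i u := by
      intro u i
      have hu : u = ∑ j, u j • (Pi.single j 1 : Fin d → ℝ) := by
        funext k
        simp [Finset.sum_apply, Pi.single_apply]
      calc q.mulVec u i = ∑ j, q i j * u j := by
            simp [Matrix.mulVec, dotProduct]
        _ = g i (∑ j, u j • (Pi.single j 1 : Fin d → ℝ)) := by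
            rw [map_sum]
            exact Finset.sum_congr rfl fun j _ => by rw [map_smul, smul_eq_mul, hqdef, mul_comm]
        _ = g i u := by rw [← hu]
    set fq : Fin d → ℝ := fun i => Q u₀ i - q.mulVec u₀ i with hfqdef
    have hub : ∀ i (u : Fin d → ℝ), q.mulVec u i - Q u i ≤ -(fq i) := by
      intro i u
      have h := hg i u
      rw [hmv u i]
      simp only [hfqdef, hmv u₀ i]
      linarith
    have hfqle : ∀ i, fq i ≤ 0 := by
      intro i
      have h := hg i (fun _ => (0 : ℝ))
      have h0 : Q (fun _ => (0 : ℝ)) i = 0 := by rw [hQ3 0]; rfl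
      have hg0 : g i (fun _ => (0 : ℝ)) = 0 := by
        rw [show (fun _ : Fin d => (0 : ℝ)) = (0 : Fin d → ℝ) from rfl, map_zero]
      simp only [hfqdef, hmv u₀ i]
      linarith
    have hrow : ∀ i, ∑ j, q i j = 0 := by
      intro i
      have hS : ∑ j, q i j = g i (fun _ => (1 : ℝ)) := by
        rw [← hmv (fun _ => (1 : ℝ)) i]
        simp [Matrix.mulVec, dotProduct]
      by_contra hne
      have hall : ∀ α : ℝ, fq i + α * (∑ j, q i j) ≤ 0 := by
        intro α
        have h := hg i (fun _ => α)
        have h0 : Q (fun _ => α) i = 0 := by rw [hQ3 α]; rfl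
        have hgα : g i (fun _ => α) = α * (∑ j, q i j) := by
          rw [hS, show (fun _ : Fin d => α) = α • (fun _ : Fin d => (1 : ℝ)) from
            by funext k; simp, map_smul, smul_eq_mul]
        simp only [hfqdef, hmv u₀ i]
        linarith
      have h1 := hall ((1 - fq i) / (∑ j, q i j))
      rw [div_mul_cancel₀ _ hne] at h1
      linarith
    have hoff : ∀ i j, i ≠ j → 0 ≤ q i j := by
      intro i j hij
      by_contra hneg
      push_neg at hneg
      set l := (fq i - 1) / q i j with hl
      have hlpos : 0 < l := div_pos_of_neg_of_neg (by linarith [hfqle i]) hneg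
      have h := hQ2 l hlpos i j hij
      have hsub2 := hg i (-(l • (Pi.single j 1 : Fin d → ℝ)))
      have hgv : g i (-(l • (Pi.single j 1 : Fin d → ℝ))) = -(l * q i j) := by
        rw [map_neg, map_smul, smul_eq_mul, hqdef]
      have hlq : l * q i j = fq i - 1 := div_mul_cancel₀ _ hneg.ne
      have hfqi : fq i = Q u₀ i - g i u₀ := by simp only [hfqdef, hmv u₀ i]
      rw [hgv, hlq] at hsub2
      linarith
    have hdiag : ∀ i, q i i ≤ 0 := by
      intro i
      have h := hrow i
      have h2 : q i i + ∑ j ∈ Finset.univ.erase i, q i j = ∑ j, q i j :=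
        Finset.add_sum_erase _ _ (Finset.mem_univ i)
      have hnn : 0 ≤ ∑ j ∈ Finset.univ.erase i, q i j :=
        Finset.sum_nonneg fun j hj => hoff i j (Ne.symm (Finset.ne_of_mem_erase hj))
      linarith
    refine ⟨q, fq, ⟨hdiag, hoff, hrow⟩, ?_, ?_⟩
    · intro i
      constructor
      · rintro x ⟨u, rfl⟩
        exact hub i u
      · intro b hb
        have hmem : q.mulVec u₀ i - Q u₀ i ∈
            Set.range fun u : Fin d → ℝ => q.mulVec u i - Q u i := ⟨u₀, rfl⟩
        have := hb hmem
        simp only [hfqdef]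
        linarith
    · funext i
      simp [hfqdef]
  refine ⟨hL, main, ?_⟩
  obtain ⟨q, fq, hq, hlub, heq⟩ := main 0
  have h0 : Q 0 = 0 := hQ3 0
  have hfq : fq = 0 := by
    rw [h0, Matrix.mulVec_zero] at heq
    simpa using heq.symm
  refine ⟨q, hq, fun i => ?_⟩
  have := hlub i
  rw [hfq] at this
  simpa using this
end
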